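/- arXiv:2305.08781 — 3 statements merged into one kernel-verified Lean document; each statement's English description precedes it below -/
import Mathlib

section
/- (Ashikhmin–Barg sufficient condition) Let C be a linear code over F_q, and let wt₀ and wt_∞ denote the minimum and maximum Hamming weights of nonzero codewords. If wt₀/wt_∞ > (q−1)/q, then C is minimal, i.e., for nonzero codewords u, v, Supp(u) ⊆ Supp(v) implies u and v are scalar multiples (over F_2: u = v). -/
open Finset

/-- Hamming weight of a vector over a finite field. -/
def wtHF {F : Type*} [DecidableEq F] [Zero F] {n : ℕ} (v : Fin n → F) : ℕ :=
  (Finset.univ.filter (fun i => v i ≠ 0)).card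

/-- Support of a vector over a finite field. -/
def suppV {F : Type*} [DecidableEq F] [Zero F] {n : ℕ} (v : Fin n → F) : Finset (Fin n) :=
  Finset.univ.filter (fun i => v i ≠ 0)

/-- Ashikhmin–Barg sufficient condition for minimality. -/
theorem ashikhmin_barg {F : Type*} [Field F] [Fintype F] [DecidableEq F] (n : ℕ)
    (C : Submodule F (Fin n → F)) (w₀ wInfty : ℕ)
    (hbounds : ∀ v ∈ C, v ≠ 0 → w₀ ≤ wtHF v ∧ wtHF v ≤ wInfty)
    (hratio : w₀ * Fintype.card F > wInfty * (Fintype.card F - 1)) :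
    ∀ u ∈ C, ∀ v ∈ C, u ≠ 0 → v ≠ 0 → suppV u ⊆ suppV v → ∃ c : F, u = c • v := by
  intro u hu v hv hu0 hv0 hsupp
  by_contra hne
  push_neg at hne
  have key : ∀ c : F, w₀ ≤ wtHF (u - c • v) := by
    intro c
    have hmem : u - c • v ∈ C := C.sub_mem hu (C.smul_mem c hv)
    have hne0 : u - c • v ≠ 0 := by
      intro h
      exact hne c (by rwa [sub_eq_zero] at h)
    exact (hbounds _ hmem hne0).1
  have hsum : ∑ c : F, wtHF (u - c • v) = (Fintype.card F - 1) * wtHF v := by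
    have h1 : ∀ c : F, wtHF (u - c • v)
        = ∑ i : Fin n, if u i - c * v i ≠ 0 then 1 else 0 := by
      intro c
      rw [wtHF, Finset.card_filter]
      simp [Pi.sub_apply, Pi.smul_apply, smul_eq_mul]
    simp_rw [h1]
    rw [Finset.sum_comm]
    have hi : ∀ i : Fin n, (∑ c : F, if u i - c * v i ≠ 0 then 1 else 0)
        = if v i ≠ 0 then Fintype.card F - 1 else 0 := by
      intro i
      by_cases hvi : v i = 0
      · have hui : u i = 0 := by
          by_contra h
          have h2 : i ∈ suppV u := by simp [suppV, h]
          have h3 := hsupp h2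
          simp [suppV, hvi] at h3
        simp [hvi, hui]
      · rw [if_pos hvi]
        rw [← Finset.card_filter]
        have heq : Finset.univ.filter (fun c : F => ¬(u i - c * v i ≠ 0))
            = {u i / v i} := by
          ext c
          simp only [Finset.mem_filter, Finset.mem_univ, true_and, not_not,
            Finset.mem_singleton, sub_eq_zero]
          constructor
          · intro h; field_simp; linear_combination -h
          · intro h; subst h; field_simp
        have := Finset.card_filter_add_card_filter_not
          (s := (Finset.univ : Finset F)) (p := fun c : F => u i - c * v i ≠ 0)
        rw [heq] at this
        rw [Finset.card_singleton, Finset.card_univ] at this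
        omega
    simp_rw [hi]
    rw [Finset.sum_ite, Finset.sum_const_zero, add_zero, Finset.sum_const,
      smul_eq_mul, wtHF, mul_comm]
  have hlb : Fintype.card F * w₀ ≤ ∑ c : F, wtHF (u - c • v) := by
    calc Fintype.card F * w₀ = ∑ _c : F, w₀ := by
          rw [Finset.sum_const, smul_eq_mul, Finset.card_univ]
      _ ≤ ∑ c : F, wtHF (u - c • v) := Finset.sum_le_sum fun c _ => key c
  have hwv : wtHF v ≤ wInfty := (hbounds v hv hv0).2
  have h2 : Fintype.card F * w₀ ≤ (Fintype.card F - 1) * wInfty := by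
    rw [hsum] at hlb
    exact le_trans hlb (Nat.mul_le_mul_left _ hwv)
  rw [mul_comm] at h2
  rw [mul_comm wInfty] at hratio
  exact absurd hratio (not_lt.mpr h2)
end

section
/- Let M, N ⊆ [m] with 1 ≤ |M| + |N| ≤ m − 1 and θ₁ = 2^{|N|+1} − 1. The parameters n = (2^m − 2^{|M|})·2^{|N|+1}, k = m, d = (2^m − 2^{|M|})·2^{|N|} satisfy Σ_{i=0}^{k−1} ⌈d/2^i⌉ = n − θ₁; moreover Σ_{i=0}^{k−1} ⌈(d+1)/2^i⌉ > n if and only if θ₁ < |M| + |N| + 1. Hence if 0 < θ₁ < |M| + |N| + 1, any binary [n, k, d] code meets the Griesmer bound condition while no binary [n, k, d+1] code can exist by the Griesmer bound. -/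
open Finset

private lemma ceil_exact (t q : ℕ) (ht : 0 < t) : (t * q) ⌈/⌉ t = q := by
  rw [Nat.ceilDiv_eq_add_pred_div]
  have h1 : t * q + t - 1 = t * q + (t - 1) := by omega
  rw [h1, Nat.mul_add_div ht, Nat.div_eq_of_lt (by omega)]
  omega

private lemma ceil_up (t q r : ℕ) (h0 : 0 < r) (hr : r ≤ t) :
    (t * q + r) ⌈/⌉ t = q + 1 := by
  rw [Nat.ceilDiv_eq_add_pred_div]
  have ht : 0 < t := by omega
  have h1 : t * (q + 1) = t * q + t := by ring
  have h2 : t * q + r + t - 1 = t * (q + 1) + (r - 1) := by omega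
  rw [h2, Nat.mul_add_div ht, Nat.div_eq_of_lt (by omega)]

private lemma sum_two_pow (k : ℕ) : ∑ i ∈ Finset.range k, 2 ^ i = 2 ^ k - 1 := by
  induction k with
  | zero => simp
  | succ n ih =>
    rw [Finset.sum_range_succ, ih]
    have : 1 ≤ 2 ^ n := Nat.one_le_two_pow
    have : 2 ^ (n + 1) = 2 * 2 ^ n := by ring
    omega

private lemma sum_two_pow_rev (k c : ℕ) :
    ∑ i ∈ Finset.range k, 2 ^ (c + k - 1 - i) = 2 ^ c * (2 ^ k - 1) := by
  have h : ∀ i ∈ Finset.range k, 2 ^ (c + k - 1 - i) = 2 ^ c * 2 ^ (k - 1 - i) := by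
    intro i hi
    rw [Finset.mem_range] at hi
    rw [← pow_add]
    congr 1
    omega
  rw [Finset.sum_congr rfl h, ← Finset.mul_sum, Finset.sum_range_reflect (fun j => 2 ^ j) k,
    sum_two_pow]

theorem griesmer_optimal_case1 (m : ℕ) (M N : Finset (Fin m))
    (h1 : 1 ≤ M.card + N.card) (h2 : M.card + N.card ≤ m - 1) :
    let θ₁ := 2 ^ (N.card + 1) - 1
    let n := (2 ^ m - 2 ^ M.card) * 2 ^ (N.card + 1)
    let d := (2 ^ m - 2 ^ M.card) * 2 ^ N.card
    (∑ i ∈ Finset.range m, d ⌈/⌉ 2 ^ i) = n - θ₁ ∧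
    ((∑ i ∈ Finset.range m, (d + 1) ⌈/⌉ 2 ^ i) > n ↔ θ₁ < M.card + N.card + 1) ∧
    (0 < θ₁ → θ₁ < M.card + N.card + 1 →
      (∑ i ∈ Finset.range m, d ⌈/⌉ 2 ^ i) ≤ n ∧
      (∑ i ∈ Finset.range m, (d + 1) ⌈/⌉ 2 ^ i) > n) := by
  intro θ₁ n d
  set a := M.card with ha
  set b := N.card with hb
  have hm : a + b + 1 ≤ m := by omega
  have ham : a ≤ m := by omega
  -- d in subtraction form
  have hd : d = 2 ^ (m + b) - 2 ^ (a + b) := by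
    show (2 ^ m - 2 ^ a) * 2 ^ b = _
    rw [Nat.sub_mul, ← pow_add, ← pow_add]
  have hn : n = 2 ^ (m + b + 1) - 2 ^ (a + b + 1) := by
    show (2 ^ m - 2 ^ a) * 2 ^ (b + 1) = _
    rw [Nat.sub_mul, ← pow_add, ← pow_add]
    congr 2 <;> omega
  -- term formulas
  have hterm : ∀ i ∈ Finset.range m,
      d ⌈/⌉ 2 ^ i = 2 ^ (m + b - i) - (if i ≤ a + b then 2 ^ (a + b - i) else 0) := by
    intro i hi
    rw [Finset.mem_range] at hi
    have hi2 : (0:ℕ) < 2 ^ i := Nat.pow_pos (by omega)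
    by_cases hc : i ≤ a + b
    · rw [if_pos hc]
      have e1 : 2 ^ i * 2 ^ (m + b - i) = 2 ^ (m + b) := by rw [← pow_add]; congr 1; omega
      have e2 : 2 ^ i * 2 ^ (a + b - i) = 2 ^ (a + b) := by rw [← pow_add]; congr 1; omega
      have e3 : d = 2 ^ i * (2 ^ (m + b - i) - 2 ^ (a + b - i)) := by
        rw [Nat.mul_sub, e1, e2, hd]
      rw [e3, ceil_exact _ _ hi2]
    · rw [if_neg hc]
      push_neg at hc
      have hA : 2 ^ (a + b) < 2 ^ i := Nat.pow_lt_pow_right (by omega) hc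
      have e1 : 2 ^ i * 2 ^ (m + b - i) = 2 ^ (m + b) := by rw [← pow_add]; congr 1; omega
      have hQ : (0:ℕ) < 2 ^ (m + b - i) := Nat.pow_pos (by omega)
      have hmul : 2 ^ i * (2 ^ (m + b - i) - 1) = 2 ^ i * 2 ^ (m + b - i) - 2 ^ i := by
        rw [Nat.mul_sub, Nat.mul_one]
      have hIle : 2 ^ i ≤ 2 ^ (m + b) := Nat.pow_le_pow_right (by omega) (by omega)
      have e3 : d = 2 ^ i * (2 ^ (m + b - i) - 1) + (2 ^ i - 2 ^ (a + b)) := by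
        rw [hd, hmul, e1]; omega
      rw [e3, ceil_up _ _ _ (by omega) (Nat.sub_le _ _)]
      omega
  have hterm' : ∀ i ∈ Finset.range m,
      (d + 1) ⌈/⌉ 2 ^ i =
        (2 ^ (m + b - i) - (if i ≤ a + b then 2 ^ (a + b - i) else 0)) +
          (if i ≤ a + b then 1 else 0) := by
    intro i hi
    rw [Finset.mem_range] at hi
    have hi2 : (0:ℕ) < 2 ^ i := Nat.pow_pos (by omega)
    by_cases hc : i ≤ a + b
    · rw [if_pos hc, if_pos hc]
      have e1 : 2 ^ i * 2 ^ (m + b - i) = 2 ^ (m + b) := by rw [← pow_add]; congr 1; omega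
      have e2 : 2 ^ i * 2 ^ (a + b - i) = 2 ^ (a + b) := by rw [← pow_add]; congr 1; omega
      have e3 : d = 2 ^ i * (2 ^ (m + b - i) - 2 ^ (a + b - i)) := by
        rw [Nat.mul_sub, e1, e2, hd]
      have e4 : d + 1 = 2 ^ i * (2 ^ (m + b - i) - 2 ^ (a + b - i)) + 1 := by omega
      rw [e4, ceil_up _ _ _ (by omega) (by omega)]
    · rw [if_neg hc, if_neg hc]
      push_neg at hc
      have hA : 2 ^ (a + b) < 2 ^ i := Nat.pow_lt_pow_right (by omega) hc
      have hab1 : (2:ℕ) ≤ 2 ^ (a + b) := by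
        calc (2:ℕ) = 2 ^ 1 := rfl
        _ ≤ 2 ^ (a + b) := Nat.pow_le_pow_right (by omega) (by omega)
      have e1 : 2 ^ i * 2 ^ (m + b - i) = 2 ^ (m + b) := by rw [← pow_add]; congr 1; omega
      have hQ : (0:ℕ) < 2 ^ (m + b - i) := Nat.pow_pos (by omega)
      have hmul : 2 ^ i * (2 ^ (m + b - i) - 1) = 2 ^ i * 2 ^ (m + b - i) - 2 ^ i := by
        rw [Nat.mul_sub, Nat.mul_one]
      have hIle : 2 ^ i ≤ 2 ^ (m + b) := Nat.pow_le_pow_right (by omega) (by omega)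
      have e3 : d + 1 = 2 ^ i * (2 ^ (m + b - i) - 1) + (2 ^ i - 2 ^ (a + b) + 1) := by
        rw [hd, hmul, e1]; omega
      rw [e3, ceil_up _ _ _ (by omega) (by omega)]
      omega
  -- sum of the main part
  have hle : ∀ i ∈ Finset.range m,
      (if i ≤ a + b then 2 ^ (a + b - i) else 0) ≤ 2 ^ (m + b - i) := by
    intro i hi
    split
    · exact Nat.pow_le_pow_right (by omega) (by omega)
    · exact Nat.zero_le _
  have hsum1 : ∑ i ∈ Finset.range m, 2 ^ (m + b - i) = 2 ^ (b + 1) * (2 ^ m - 1) := by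
    have := sum_two_pow_rev m (b + 1)
    rw [← this]
    apply Finset.sum_congr rfl
    intro i hi
    rw [Finset.mem_range] at hi
    congr 1
    omega
  have hsum2 : ∑ i ∈ Finset.range m, (if i ≤ a + b then 2 ^ (a + b - i) else 0)
      = 2 ^ (a + b + 1) - 1 := by
    rw [← Finset.sum_subset (Finset.range_subset_range.2 hm)
      (by intro x _ hx; rw [Finset.mem_range] at hx; rw [if_neg (by omega)])]
    have : ∀ i ∈ Finset.range (a + b + 1),
        (if i ≤ a + b then 2 ^ (a + b - i) else 0) = 2 ^ (0 + (a + b + 1) - 1 - i) := by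
      intro i hi
      rw [Finset.mem_range] at hi
      rw [if_pos (by omega)]
      congr 1; omega
    rw [Finset.sum_congr rfl this, sum_two_pow_rev (a + b + 1) 0]
    simp
  have hS : ∑ i ∈ Finset.range m, d ⌈/⌉ 2 ^ i
      = 2 ^ (b + 1) * (2 ^ m - 1) - (2 ^ (a + b + 1) - 1) := by
    rw [Finset.sum_congr rfl hterm, Finset.sum_tsub_distrib _ hle, hsum1, hsum2]
  have hcard : ∑ i ∈ Finset.range m, (if i ≤ a + b then 1 else 0) = a + b + 1 := by
    rw [← Finset.sum_subset (Finset.range_subset_range.2 hm)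
      (by intro x _ hx; rw [Finset.mem_range] at hx; rw [if_neg (by omega)])]
    rw [Finset.sum_congr rfl (g := fun _ => 1)
      (by intro i hi; rw [Finset.mem_range] at hi; rw [if_pos (by omega)])]
    simp
  have hS' : ∑ i ∈ Finset.range m, (d + 1) ⌈/⌉ 2 ^ i
      = (2 ^ (b + 1) * (2 ^ m - 1) - (2 ^ (a + b + 1) - 1)) + (a + b + 1) := by
    rw [Finset.sum_congr rfl hterm', Finset.sum_add_distrib,
      Finset.sum_tsub_distrib _ hle, hsum1, hsum2, hcard]
  -- numeric facts for omega
  have hdist : 2 ^ (b + 1) * (2 ^ m - 1) = 2 ^ (m + b + 1) - 2 ^ (b + 1) := by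
    rw [Nat.mul_sub, ← pow_add, Nat.mul_one]
    congr 2; omega
  have hθ : θ₁ = 2 ^ (b + 1) - 1 := rfl
  have f1 : 2 ^ (b + 1) ≤ 2 ^ (a + b + 1) := Nat.pow_le_pow_right (by omega) (by omega)
  have f2 : 2 ^ (a + b + 1) * 2 ≤ 2 ^ (m + b + 1) := by
    calc 2 ^ (a + b + 1) * 2 = 2 ^ (a + b + 2) := by ring
    _ ≤ 2 ^ (m + b + 1) := Nat.pow_le_pow_right (by omega) (by omega)
  have f3 : (1:ℕ) ≤ 2 ^ (b + 1) := Nat.one_le_two_pow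
  rw [hS, hS', hdist, hn, hθ]
  omega
end

section
/- Let M, N ⊆ [m] with m ≤ |M| + |N| ≤ 2m − 1 and θ₂ = 2^{|M|+|N|+1−m}(2^{m−|M|} − 1). The parameters n = (2^m − 2^{|M|})·2^{|N|+1}, k = m, d = (2^m − 2^{|M|})·2^{|N|} satisfy Σ_{i=0}^{k−1} ⌈d/2^i⌉ = n − θ₂, and Σ_{i=0}^{k−1} ⌈(d+1)/2^i⌉ = n − θ₂ + m; hence if 0 < θ₂ < m, the Griesmer bound admits [n, k, d] but rules out [n, k, d+1] binary codes. -/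
open Finset

lemma aux_sum_two_pow (m : ℕ) : ∑ i ∈ Finset.range m, 2 ^ i = 2 ^ m - 1 := by
  induction m with
  | zero => simp
  | succ k ih =>
    rw [Finset.sum_range_succ, ih, pow_succ]
    have : 1 ≤ 2 ^ k := Nat.one_le_two_pow
    omega

lemma aux_ceilDiv_dvd {a b : ℕ} (hb : 0 < b) (h : b ∣ a) : a ⌈/⌉ b = a / b := by
  obtain ⟨q, rfl⟩ := h
  rw [Nat.ceilDiv_eq_add_pred_div]
  rw [Nat.add_sub_assoc hb, Nat.mul_add_div hb, Nat.div_eq_of_lt (by omega),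
    Nat.mul_div_cancel_left _ hb]
  omega

lemma aux_ceilDiv_succ {a b : ℕ} (hb : 0 < b) (h : b ∣ a) : (a + 1) ⌈/⌉ b = a / b + 1 := by
  rw [Nat.ceilDiv_eq_add_pred_div]
  have : a + 1 + b - 1 = a + b := by omega
  rw [this, Nat.add_div_right _ hb]

theorem griesmer_optimal_case2 (m : ℕ) (M N : Finset (Fin m))
    (h1 : m ≤ M.card + N.card) (h2 : M.card + N.card ≤ 2 * m - 1) :
    let θ₂ := 2 ^ (M.card + N.card + 1 - m) * (2 ^ (m - M.card) - 1)
    let n := (2 ^ m - 2 ^ M.card) * 2 ^ (N.card + 1)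
    let d := (2 ^ m - 2 ^ M.card) * 2 ^ N.card
    (∑ i ∈ Finset.range m, d ⌈/⌉ 2 ^ i) = n - θ₂ ∧
    (∑ i ∈ Finset.range m, (d + 1) ⌈/⌉ 2 ^ i) = n - θ₂ + m ∧
    (0 < θ₂ → θ₂ < m →
      (∑ i ∈ Finset.range m, d ⌈/⌉ 2 ^ i) ≤ n ∧
      (∑ i ∈ Finset.range m, (d + 1) ⌈/⌉ 2 ^ i) > n) := by
  intro θ₂ n d
  set a := M.card with ha_def
  set b := N.card with hb_def
  have ha : a ≤ m := le_trans (Finset.card_le_univ M) (by simp)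
  -- write m - a = c, a + b + 1 - m = e
  set c := m - a with hc_def
  set e := a + b + 1 - m with he_def
  have hmc : a + c = m := by omega
  have he : a + b + 1 = m + e := by omega
  have he1 : 1 ≤ e := by omega
  set K := 2 ^ c - 1 with hK_def
  have hK1 : 1 ≤ 2 ^ c := Nat.one_le_two_pow
  have hsplit : 2 ^ m - 2 ^ a = 2 ^ a * K := by
    rw [hK_def, Nat.mul_sub, mul_one, ← pow_add, hmc]
  have hd : d = 2 ^ (m + e - 1) * K := by
    show (2 ^ m - 2 ^ a) * 2 ^ b = _
    have hab : a + b = m + e - 1 := by omega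
    rw [hsplit, mul_right_comm, ← pow_add, hab]
  have hθ : θ₂ = 2 ^ e * K := rfl
  have hn : n = θ₂ * 2 ^ m := by
    show (2 ^ m - 2 ^ a) * 2 ^ (b + 1) = _
    have hab : a + (b + 1) = e + m := by omega
    rw [hsplit, hθ, mul_right_comm (2 ^ a) K, ← pow_add,
      mul_right_comm (2 ^ e) K, ← pow_add, hab]
  -- terms of the first sum
  have hterm : ∀ i ∈ Finset.range m, d ⌈/⌉ 2 ^ i = 2 ^ (e + (m - 1 - i)) * K := by
    intro i hi
    rw [Finset.mem_range] at hi
    have hdvd : 2 ^ i ∣ d := by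
      rw [hd]
      exact Dvd.dvd.mul_right (pow_dvd_pow 2 (by omega)) K
    rw [aux_ceilDiv_dvd (Nat.two_pow_pos i) hdvd, hd]
    have : m + e - 1 = i + (e + (m - 1 - i)) := by omega
    rw [this, pow_add, mul_assoc, Nat.mul_div_cancel_left _ (Nat.two_pow_pos i)]
  have hsum1 : (∑ i ∈ Finset.range m, d ⌈/⌉ 2 ^ i) = θ₂ * (2 ^ m - 1) := by
    rw [Finset.sum_congr rfl hterm]
    have h3 : ∀ i ∈ Finset.range m, 2 ^ (e + (m - 1 - i)) * K = 2 ^ e * K * 2 ^ (m - 1 - i) := by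
      intro i _; rw [pow_add]; ring
    rw [Finset.sum_congr rfl h3,
      Finset.sum_range_reflect (fun j => 2 ^ e * K * 2 ^ j) m,
      ← Finset.mul_sum, aux_sum_two_pow, hθ]
  have hsub : n - θ₂ = θ₂ * (2 ^ m - 1) := by
    rw [hn, Nat.mul_sub, mul_one]
  constructor
  · rw [hsum1, hsub]
  have hsum2 : (∑ i ∈ Finset.range m, (d + 1) ⌈/⌉ 2 ^ i) = n - θ₂ + m := by
    have : ∀ i ∈ Finset.range m, (d + 1) ⌈/⌉ 2 ^ i = d ⌈/⌉ 2 ^ i + 1 := by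
      intro i hi
      rw [Finset.mem_range] at hi
      have hpos : 0 < 2 ^ i := Nat.two_pow_pos i
      have hdvd : 2 ^ i ∣ d := by
        rw [hd]
        exact Dvd.dvd.mul_right (pow_dvd_pow 2 (by omega)) K
      rw [aux_ceilDiv_succ hpos hdvd, aux_ceilDiv_dvd hpos hdvd]
    rw [Finset.sum_congr rfl this, Finset.sum_add_distrib, Finset.sum_const,
      Finset.card_range, smul_eq_mul, mul_one, hsum1, hsub]
  refine ⟨hsum2, fun hθpos hθm => ?_⟩
  have hθn : θ₂ ≤ n := by
    rw [hn]
    exact Nat.le_mul_of_pos_right _ (Nat.two_pow_pos m)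
  constructor
  · rw [hsum1, ← hsub]; omega
  · rw [hsum2]; omega
end
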